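/- Locked-levels bound: let $T$ be a finite rooted tree with anonymity $a\colon T\to\mathbb{N}^+$ superadditive over children and $a(r)=n$ at the root $r$. Suppose the children of $r$ are partitioned into a single leader child $\ell$ with $a(\ell)=1$ and other children with total anonymity $n-1$. Let $S$ be a well-spread set of guessed nodes, none of which is a descendant of $\ell$ or equal to $\ell$ or $r$, with guesses satisfying $g\geq a$ on $S$ and $g=a$ on only-children, and suppose no node of $S$ is heavy. Then $|S|\leq n-1$. -/

import Mathlib

open Finset
open scoped Classical

/-- `u` is a (weak) descendant of `v`: iterating `parent` from `u` reaches `v`. -/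
def IsDesc {T : Type*} (r : T) (parent : T → T) (u v : T) : Prop :=
  Relation.ReflTransGen (fun a b => a ≠ r ∧ parent a = b) u v

/-- `u` is a strict descendant of `v`. -/
def IsStrictDesc {T : Type*} (r : T) (parent : T → T) (u v : T) : Prop :=
  Relation.TransGen (fun a b => a ≠ r ∧ parent a = b) u v

/-- The children of a node `v` in the rooted tree. -/
noncomputable def childrenOf {T : Type*} [Fintype T] [DecidableEq T]
    (parent : T → T) (v : T) : Finset T :=
  Finset.univ.filter (fun c => parent c = v ∧ c ≠ v)

/-- The weight of `v`: the number of guessed nodes in the subtree rooted at `v`. -/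
noncomputable def weightOf {T : Type*} [Fintype T] [DecidableEq T]
    (r : T) (parent : T → T) (S : Finset T) (v : T) : ℕ :=
  (S.filter (fun u => IsDesc r parent u v)).card

/-!
Write `w` for the weight. By induction from the leaves, every node `v` satisfies
`∑_{c child of v} w c < a v`. Indeed, if `v` has children, superadditivity reduces this to
finding one child `c` with `w c < a c` (the others have `w c ≤ 1 + ∑ w < 1 + a c`). A child
outside `S` has weight equal to the sum over its own children, so the induction hypothesis
applies; if all children lie in `S`, well-spreadness leaves a single child `c`, which is then an
only-child with `g c = a c`, and `w c < g c` because `c` is not heavy.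
Hence `w c ≤ a c` for every child `c ≠ ℓ` of the root, and these subtrees contain all of `S`.
-/

section RootedTree

variable {T : Type*} {r : T} {parent : T → T} {depth : T → ℕ}

theorem IsDesc.depth_le (hdepth : ∀ v, v ≠ r → depth v = depth (parent v) + 1)
    {u v : T} (h : IsDesc r parent u v) : depth v ≤ depth u := by
  induction h with
  | refl => exact le_rfl
  | tail _ hstep ih =>
    have := hdepth _ hstep.1
    rw [hstep.2] at this
    omega

theorem IsDesc.eq_of_depth_le (hdepth : ∀ v, v ≠ r → depth v = depth (parent v) + 1)
    {u v : T} (h : IsDesc r parent u v) (hle : depth u ≤ depth v) : u = v := by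
  rcases Relation.ReflTransGen.cases_head h with rfl | ⟨b, hstep, hb⟩
  · rfl
  · have := hdepth u hstep.1
    rw [hstep.2] at this
    have := IsDesc.depth_le hdepth hb
    omega

variable [Fintype T] [DecidableEq T] {u v c c' : T}

theorem mem_childrenOf : c ∈ childrenOf parent v ↔ parent c = v ∧ c ≠ v := by
  simp [childrenOf]

theorem ne_root_of_mem_childrenOf (hroot : parent r = r) (hc : c ∈ childrenOf parent v) :
    c ≠ r := by
  rintro rfl
  exact (mem_childrenOf.1 hc).2 (hroot.symm.trans (mem_childrenOf.1 hc).1)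

theorem depth_of_mem_childrenOf (hroot : parent r = r)
    (hdepth : ∀ v, v ≠ r → depth v = depth (parent v) + 1) (hc : c ∈ childrenOf parent v) :
    depth c = depth v + 1 := by
  rw [hdepth c (ne_root_of_mem_childrenOf hroot hc), (mem_childrenOf.1 hc).1]

theorem isDesc_iff_eq_or_exists_childrenOf (hroot : parent r = r)
    (hdepth : ∀ v, v ≠ r → depth v = depth (parent v) + 1) :
    IsDesc r parent u v ↔ u = v ∨ ∃ c ∈ childrenOf parent v, IsDesc r parent u c := by
  constructor
  · intro h
    rcases Relation.ReflTransGen.cases_tail h with rfl | ⟨c, hc, hstep⟩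
    · exact Or.inl rfl
    · refine Or.inr ⟨c, mem_childrenOf.2 ⟨hstep.2, fun hcv => ?_⟩, hc⟩
      have := hdepth c hstep.1
      rw [hstep.2, hcv] at this
      omega
  · rintro (rfl | ⟨c, hc, hdesc⟩)
    · exact Relation.ReflTransGen.refl
    · exact hdesc.tail ⟨ne_root_of_mem_childrenOf hroot hc, (mem_childrenOf.1 hc).1⟩

theorem eq_of_isDesc_of_mem_childrenOf (hroot : parent r = r)
    (hdepth : ∀ v, v ≠ r → depth v = depth (parent v) + 1)
    (hc : c ∈ childrenOf parent v) (hc' : c' ∈ childrenOf parent v)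
    (hu : IsDesc r parent u c) (hu' : IsDesc r parent u c') : c = c' := by
  have hparent : Relator.RightUnique (fun a b : T => a ≠ r ∧ parent a = b) :=
    fun _ _ _ hb hc => hb.2.symm.trans hc.2
  have := depth_of_mem_childrenOf hroot hdepth hc
  have := depth_of_mem_childrenOf hroot hdepth hc'
  rcases Relation.ReflTransGen.total_of_right_unique hparent hu hu' with h | h
  · exact IsDesc.eq_of_depth_le hdepth h (by omega)
  · exact (IsDesc.eq_of_depth_le hdepth h (by omega)).symm

theorem weightOf_eq (hroot : parent r = r)
    (hdepth : ∀ v, v ≠ r → depth v = depth (parent v) + 1) (S : Finset T) (v : T) :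
    weightOf r parent S v
      = (if v ∈ S then 1 else 0) + ∑ c ∈ childrenOf parent v, weightOf r parent S c := by
  have hsplit : S.filter (fun u => IsDesc r parent u v) = S.filter (· = v) ∪
      (childrenOf parent v).biUnion (fun c => S.filter (fun u => IsDesc r parent u c)) := by
    ext u
    simp only [mem_filter, mem_union, mem_biUnion]
    rw [isDesc_iff_eq_or_exists_childrenOf hroot hdepth]
    tauto
  have hdisj : Disjoint (S.filter (· = v))
      ((childrenOf parent v).biUnion (fun c => S.filter (fun u => IsDesc r parent u c))) := by
    simp only [disjoint_left, mem_filter, mem_biUnion, not_exists, not_and]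
    rintro _ ⟨-, rfl⟩ c hc - hdesc
    have := hdesc.depth_le hdepth
    have := depth_of_mem_childrenOf hroot hdepth hc
    omega
  have hpairwise : ((childrenOf parent v : Set T)).PairwiseDisjoint
      (fun c => S.filter (fun u => IsDesc r parent u c)) := by
    intro c hc c' hc' hne
    simp only [Function.onFun, disjoint_left, mem_filter]
    exact fun _ hu hu' => hne (eq_of_isDesc_of_mem_childrenOf hroot hdepth hc hc' hu.2 hu'.2)
  rw [weightOf, hsplit, card_union_of_disjoint hdisj, card_biUnion hpairwise, filter_eq']
  split_ifs <;> rfl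

end RootedTree

section Weight

variable {T : Type*} [Fintype T] [DecidableEq T] {r : T} {parent : T → T} {depth : T → ℕ}
  {a g : T → ℕ} {S : Finset T}

theorem sum_weightOf_childrenOf_lt (hroot : parent r = r)
    (hdepth : ∀ v, v ≠ r → depth v = depth (parent v) + 1)
    (hapos : ∀ v, 0 < a v) (hsuper : ∀ v, ∑ c ∈ childrenOf parent v, a c ≤ a v)
    (hws : ∀ u ∈ S, ∀ v ∈ S, depth u = depth v → u = v)
    (honly : ∀ v ∈ S, (∀ c, parent c = parent v → c ≠ parent v → c = v) → g v = a v)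
    (hnoheavy : ∀ v ∈ S, ¬ (g v ≤ weightOf r parent S v)) (v : T) :
    ∑ c ∈ childrenOf parent v, weightOf r parent S c < a v := by
  induction v using (measure fun v => univ.sup depth - depth v).wf.induction with
  | h v ih =>
  rcases (childrenOf parent v).eq_empty_or_nonempty with hleaf | ⟨c₀, hc₀⟩
  · simpa [hleaf] using hapos v
  have ih' : ∀ c ∈ childrenOf parent v,
      ∑ d ∈ childrenOf parent c, weightOf r parent S d < a c := fun c hc => ih c <| by
    have := depth_of_mem_childrenOf hroot hdepth hc
    have := le_sup (f := depth) (mem_univ c)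
    change univ.sup depth - depth c < univ.sup depth - depth v
    omega
  have hle : ∀ c ∈ childrenOf parent v, weightOf r parent S c ≤ a c := fun c hc => by
    have := ih' c hc
    rw [weightOf_eq hroot hdepth]
    split_ifs <;> omega
  have hlt : ∃ c ∈ childrenOf parent v, weightOf r parent S c < a c := by
    by_cases hout : ∃ c ∈ childrenOf parent v, c ∉ S
    · obtain ⟨c, hc, hcS⟩ := hout
      refine ⟨c, hc, ?_⟩
      rw [weightOf_eq hroot hdepth, if_neg hcS, zero_add]
      exact ih' c hc
    push Not at hout
    have honlychild : ∀ c, parent c = parent c₀ → c ≠ parent c₀ → c = c₀ := by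
      intro c hpar hne
      rw [(mem_childrenOf.1 hc₀).1] at hpar hne
      have hc : c ∈ childrenOf parent v := mem_childrenOf.2 ⟨hpar, hne⟩
      refine hws c (hout c hc) c₀ (hout c₀ hc₀) ?_
      rw [depth_of_mem_childrenOf hroot hdepth hc, depth_of_mem_childrenOf hroot hdepth hc₀]
    have := hnoheavy c₀ (hout c₀ hc₀)
    rw [honly c₀ (hout c₀ hc₀) honlychild] at this
    exact ⟨c₀, hc₀, by omega⟩
  calc ∑ c ∈ childrenOf parent v, weightOf r parent S c
      < ∑ c ∈ childrenOf parent v, a c := sum_lt_sum hle hlt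
    _ ≤ a v := hsuper v

end Weight

theorem locked_levels_bound_general {T : Type*} [Fintype T] [DecidableEq T]
    (r : T) (parent : T → T) (depth : T → ℕ)
    (hroot : parent r = r)
    (hdepth : ∀ v, v ≠ r → depth v = depth (parent v) + 1)
    (hreach : ∀ v, IsDesc r parent v r)
    (a : T → ℕ) (hapos : ∀ v, 0 < a v)
    (hsuper : ∀ v, ∑ c ∈ childrenOf parent v, a c ≤ a v)
    (n : ℕ)
    (ℓ : T) (hℓchild : ℓ ∈ childrenOf parent r) (haℓ : a ℓ = 1)
    (hrootsum : ∑ c ∈ childrenOf parent r, a c = n)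
    (S : Finset T) (g : T → ℕ)
    (hws : ∀ u ∈ S, ∀ v ∈ S, depth u = depth v → u = v)
    (honly : ∀ v ∈ S, (∀ c, parent c = parent v → c ≠ parent v → c = v) → g v = a v)
    (hSnotr : r ∉ S)
    (hSnotℓ : ∀ v ∈ S, ¬ IsDesc r parent v ℓ)
    (hnoheavy : ∀ v ∈ S, ¬ (g v ≤ weightOf r parent S v)) :
    S.card ≤ n - 1 := by
  have hweight_le : ∀ v, weightOf r parent S v ≤ a v := fun v => by
    have := sum_weightOf_childrenOf_lt hroot hdepth hapos hsuper hws honly hnoheavy v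
    rw [weightOf_eq hroot hdepth]
    split_ifs <;> omega
  have hweight_root : weightOf r parent S r = S.card := by
    rw [weightOf, filter_true_of_mem fun u _ => hreach u]
  have hweight_leader : weightOf r parent S ℓ = 0 := by
    rw [weightOf, card_eq_zero, filter_eq_empty_iff]
    exact hSnotℓ
  have hcard : S.card = ∑ c ∈ (childrenOf parent r).erase ℓ, weightOf r parent S c := by
    rw [← hweight_root, weightOf_eq hroot hdepth, if_neg hSnotr, ← add_sum_erase _ _ hℓchild,
      hweight_leader, zero_add, zero_add]
  have hrest : ∑ c ∈ (childrenOf parent r).erase ℓ, a c = n - 1 := by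
    have := add_sum_erase _ a hℓchild
    omega
  calc S.card = ∑ c ∈ (childrenOf parent r).erase ℓ, weightOf r parent S c := hcard
    _ ≤ ∑ c ∈ (childrenOf parent r).erase ℓ, a c := sum_le_sum fun c _ => hweight_le c
    _ = n - 1 := hrest

/-- Locked-levels bound. With `a(r) = n`, the children of the root consisting of
a leader child `ℓ` with `a(ℓ) = 1` together with other children of total anonymity `n - 1`,
and a well-spread guessed set `S` avoiding `r`, `ℓ` and the subtree of `ℓ`, with `g ≥ a` on
`S`, `g = a` on only-children, and no heavy node, we get `|S| ≤ n - 1`. -/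
theorem locked_levels_bound {T : Type*} [Fintype T] [DecidableEq T]
    (r : T) (parent : T → T) (depth : T → ℕ)
    (hroot : parent r = r) (hdepth0 : depth r = 0)
    (hdepth : ∀ v, v ≠ r → depth v = depth (parent v) + 1)
    (hreach : ∀ v, IsDesc r parent v r)
    (a : T → ℕ) (hapos : ∀ v, 0 < a v)
    (hsuper : ∀ v, ∑ c ∈ childrenOf parent v, a c ≤ a v)
    (n : ℕ) (har : a r = n)
    (ℓ : T) (hℓchild : ℓ ∈ childrenOf parent r) (haℓ : a ℓ = 1)
    (hrootsum : ∑ c ∈ childrenOf parent r, a c = n)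
    (S : Finset T) (g : T → ℕ)
    (hg : ∀ v ∈ S, a v ≤ g v)
    (hws : ∀ u ∈ S, ∀ v ∈ S, depth u = depth v → u = v)
    (honly : ∀ v ∈ S, (∀ c, parent c = parent v → c ≠ parent v → c = v) → g v = a v)
    (hSnotr : r ∉ S)
    (hSnotℓ : ∀ v ∈ S, ¬ IsDesc r parent v ℓ)
    (hnoheavy : ∀ v ∈ S, ¬ (g v ≤ weightOf r parent S v)) :
    S.card ≤ n - 1 :=
  locked_levels_bound_general r parent depth hroot hdepth hreach a hapos hsuper n ℓ hℓchild haℓ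
    hrootsum S g hws honly hSnotr hSnotℓ hnoheavy
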